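/- arXiv:cond-mat/0404483 — 4 statements merged into one kernel-verified Lean document; each statement's English description precedes it below -/
import Mathlib

section
/- For every integer d ≥ 1, the function R : ℝ → ℝ is continuous, R(E) = 0 for E ≤ −2d, R(E) = 1 for E ≥ 2d, and R is strictly increasing on the interval [−2d, 2d]. Consequently, for every ρ ∈ (0,1) there is a unique E ∈ (−2d, 2d) with R(E) = ρ. -/
/-!
With `μ` Lebesgue measure on the Brillouin zone `[-π, π]^d`, `R(E)` is the normalised measure of
`{ε < E}`. Each level set of `ε` is null: by Fubini in the first coordinate it reduces to the
countable level sets of `cos`. Hence `E ↦ μ {ε < E}` is continuous (dominated convergence of the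
indicators, which converge off `{ε = E}`), and `μ {ε < E} = μ(zone)` once `E ≥ 2d`.
It is strictly increasing on `[-2d, 2d]` because for `E₁ < E₂` the open set
`{E₁ < ε < E₂} ∩ (-π, π)^d` is nonempty: it contains a diagonal point `(a, …, a)`.
-/

open MeasureTheory

/-- The tight-binding dispersion relation `ε(k) = -2 Σᵢ cos kᵢ`. -/
noncomputable def eps (d : ℕ) (k : Fin d → ℝ) : ℝ := -2 * ∑ i, Real.cos (k i)

/-- `R(E) = (2π)^{-d} λ({k ∈ [-π,π]^d : ε(k) < E})`. -/
noncomputable def Rfun (d : ℕ) (E : ℝ) : ℝ :=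
  (volume {k : Fin d → ℝ | (∀ i, k i ∈ Set.Icc (-Real.pi) Real.pi) ∧ eps d k < E}).toReal
    / (2 * Real.pi) ^ d

open Set Filter Topology Real

lemma Real.countable_setOf_cos_eq (c : ℝ) : {t : ℝ | cos t = c}.Countable := by
  refine (countable_iUnion fun k : ℤ =>
    ({2 * k * π + arccos c, 2 * k * π - arccos c} : Set ℝ).toFinite.countable).mono ?_
  intro t ht
  have hc : cos (arccos c) = cos t := by
    rw [cos_arccos (ht ▸ neg_one_le_cos t) (ht ▸ cos_le_one t), ht]
  obtain ⟨k, hk⟩ := cos_eq_cos_iff.mp hc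
  exact mem_iUnion.2 ⟨k, hk⟩

lemma volume_setOf_sum_comp_eq_eq_zero {f : ℝ → ℝ} (hf : Measurable f)
    (hfib : ∀ c, volume (f ⁻¹' {c}) = 0) {n : ℕ} (hn : n ≠ 0) (c : ℝ) :
    volume {k : Fin n → ℝ | ∑ i, f (k i) = c} = 0 := by
  obtain ⟨m, rfl⟩ := Nat.exists_eq_succ_of_ne_zero hn
  set T : Set (ℝ × (Fin m → ℝ)) := {p | f p.1 + ∑ j, f (p.2 j) = c}
  have hT : MeasurableSet T := measurableSet_eq_fun (by fun_prop) measurable_const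
  have hslice (y : Fin m → ℝ) : (fun t => (t, y)) ⁻¹' T = f ⁻¹' {c - ∑ j, f (y j)} := by
    ext t
    simp [T, eq_sub_iff_add_eq]
  have hT0 : volume T = 0 := by
    simp [Measure.volume_eq_prod, Measure.prod_apply_symm hT, hslice, hfib]
  have hpre : {k : Fin (m + 1) → ℝ | ∑ i, f (k i) = c} =
      MeasurableEquiv.piFinSuccAbove (fun _ => ℝ) 0 ⁻¹' T := by
    ext k
    simp [T, Fin.sum_univ_succ, MeasurableEquiv.piFinSuccAbove_apply, Fin.tail]
  rw [hpre, (volume_preserving_piFinSuccAbove _ 0).measure_preimage hT.nullMeasurableSet, hT0]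

lemma continuous_eps (d : ℕ) : Continuous (eps d) := by
  unfold eps
  fun_prop

lemma volume_eps_preimage_singleton_eq_zero {d : ℕ} (hd : d ≠ 0) (c : ℝ) :
    volume (eps d ⁻¹' {c}) = 0 := by
  have h : eps d ⁻¹' {c} = {k | ∑ i, cos (k i) = -c / 2} := by
    ext k
    simp only [eps, mem_preimage, mem_singleton_iff, mem_ofPred_eq]
    constructor <;> intro hk <;> linarith
  rw [h]
  exact volume_setOf_sum_comp_eq_eq_zero measurable_cos
    (fun c => (Real.countable_setOf_cos_eq c).measure_zero _) hd _

lemma eps_mem_Icc (d : ℕ) (k : Fin d → ℝ) : eps d k ∈ Icc (-(2 * (d : ℝ))) (2 * d) := by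
  have hs : |∑ i, cos (k i)| ≤ d := (Finset.abs_sum_le_sum_abs _ _).trans <| by
    simpa using Finset.sum_le_sum fun i (_ : i ∈ Finset.univ) => abs_cos_le_one (k i)
  rw [abs_le] at hs
  constructor <;> simp only [eps] <;> linarith [hs.1, hs.2]

lemma exists_mem_pi_Ioo_eps_eq {d : ℕ} (hd : d ≠ 0) {c : ℝ}
    (hc : c ∈ Ioo (-(2 * (d : ℝ))) (2 * d)) :
    ∃ k ∈ univ.pi fun _ : Fin d => Ioo (-π) π, eps d k = c := by
  have hx : -c / (2 * d) ∈ Ioo (-1 : ℝ) 1 := by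
    constructor
    · rw [lt_div_iff₀ (by positivity)]; linarith [hc.2]
    · rw [div_lt_one (by positivity)]; linarith [hc.1]
  refine ⟨fun _ => arccos (-c / (2 * d)), fun _ _ => ⟨?_, arccos_lt_pi.2 hx.1⟩, ?_⟩
  · linarith [arccos_nonneg (-c / (2 * d)), pi_pos]
  · simp [eps, cos_arccos hx.1.le hx.2.le]
    field_simp

def brillouinZone (d : ℕ) : Set (Fin d → ℝ) := univ.pi fun _ => Icc (-π) π

lemma volume_brillouinZone (d : ℕ) :
    volume (brillouinZone d) = ENNReal.ofReal ((2 * π) ^ d) := by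
  rw [brillouinZone, volume_pi_pi]
  simp [volume_Icc, two_mul, ENNReal.ofReal_pow (by positivity : (0 : ℝ) ≤ π + π)]

instance (d : ℕ) : IsFiniteMeasure (volume.restrict (brillouinZone d)) :=
  isFiniteMeasure_restrict.2 (by simp [volume_brillouinZone])

lemma Rfun_eq_toReal_measure (d : ℕ) (E : ℝ) :
    Rfun d E = (volume.restrict (brillouinZone d) {k | eps d k < E}).toReal / (2 * π) ^ d := by
  rw [Measure.restrict_apply (measurableSet_lt (continuous_eps d).measurable measurable_const)]
  simp [Rfun, brillouinZone, and_comm, Set.pi, inter_def]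

lemma restrict_brillouinZone_eps_preimage_singleton_eq_zero {d : ℕ} (hd : d ≠ 0) (c : ℝ) :
    volume.restrict (brillouinZone d) (eps d ⁻¹' {c}) = 0 :=
  nonpos_iff_eq_zero.1 <|
    (Measure.restrict_apply_le _ _).trans_eq (volume_eps_preimage_singleton_eq_zero hd c)

lemma continuous_toReal_measure_setOf_lt {α : Type*} [MeasurableSpace α] {μ : Measure α}
    [IsFiniteMeasure μ] {g : α → ℝ} (hg : Measurable g) (hfib : ∀ c, μ (g ⁻¹' {c}) = 0) :
    Continuous fun E => (μ {x | g x < E}).toReal := by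
  refine continuous_iff_continuousAt.2 fun a => ?_
  have hlim : Tendsto (fun E => μ {x | g x < E}) (𝓝 a) (𝓝 (μ {x | g x < a})) := by
    refine tendsto_measure_of_ae_tendsto_indicator_of_isFiniteMeasure _
      (measurableSet_lt hg measurable_const) (fun _ => measurableSet_lt hg measurable_const) ?_
    filter_upwards [measure_eq_zero_iff_ae_notMem.1 (hfib a)] with x hx
    rcases lt_or_gt_of_ne hx with h | h
    · filter_upwards [eventually_gt_nhds h] with E hE
      simp [h, hE]
    · filter_upwards [eventually_lt_nhds h] with E hE
      simp [h.not_gt, hE.not_gt]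
  exact (ENNReal.tendsto_toReal (measure_ne_top μ _)).comp hlim

lemma measure_setOf_eps_lt_of_le {d : ℕ} (hd : d ≠ 0) {E : ℝ} (hE : 2 * (d : ℝ) ≤ E) :
    volume.restrict (brillouinZone d) {k | eps d k < E} = volume (brillouinZone d) := by
  rw [← Measure.restrict_apply_univ (s := brillouinZone d)]
  refine measure_congr (ae_eq_univ.2 (measure_mono_null ?_
    (restrict_brillouinZone_eps_preimage_singleton_eq_zero hd (2 * d))))
  intro k hk
  exact le_antisymm (eps_mem_Icc d k).2 (hE.trans (not_lt.1 hk))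

lemma strictMonoOn_measure_setOf_eps_lt {d : ℕ} (hd : d ≠ 0) :
    StrictMonoOn (fun E => volume.restrict (brillouinZone d) {k | eps d k < E})
      (Icc (-(2 * (d : ℝ))) (2 * d)) := by
  intro E₁ hE₁ E₂ hE₂ h
  set μ := volume.restrict (brillouinZone d)
  obtain ⟨k₀, hk₀, hεk₀⟩ := exists_mem_pi_Ioo_eps_eq hd (c := (E₁ + E₂) / 2)
    ⟨by linarith [hE₁.1], by linarith [hE₂.2]⟩
  set U := eps d ⁻¹' Ioo E₁ E₂ ∩ univ.pi fun _ => Ioo (-π) π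
  have hU : IsOpen U := ((continuous_eps d).isOpen_preimage _ isOpen_Ioo).inter
    (isOpen_set_pi finite_univ fun _ _ => isOpen_Ioo)
  have hUzone : U ⊆ brillouinZone d := fun k hk i _ => Ioo_subset_Icc_self (hk.2 i trivial)
  have hUpos : 0 < μ U := by
    rw [Measure.restrict_eq_self _ hUzone]
    refine hU.measure_pos volume ⟨k₀, ?_, hk₀⟩
    rw [mem_preimage, hεk₀]
    constructor <;> linarith
  have hdisj : Disjoint {k | eps d k < E₁} U :=
    disjoint_left.2 fun k hk hkU => lt_asymm hk hkU.1.1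
  have hsub : {k | eps d k < E₁} ∪ U ⊆ {k | eps d k < E₂} :=
    union_subset (fun k hk => hk.trans h) fun k hk => hk.1.2
  calc μ {k | eps d k < E₁} < μ {k | eps d k < E₁} + μ U :=
        ENNReal.lt_add_right (measure_ne_top μ _) hUpos.ne'
    _ = μ ({k | eps d k < E₁} ∪ U) := (measure_union hdisj hU.measurableSet).symm
    _ ≤ μ {k | eps d k < E₂} := measure_mono hsub

lemma StrictMonoOn.existsUnique_mem_Ioo_eq {f : ℝ → ℝ} {a b : ℝ} (hab : a ≤ b)
    (hcont : ContinuousOn f (Icc a b)) (hmono : StrictMonoOn f (Icc a b)) {y : ℝ}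
    (hy : y ∈ Ioo (f a) (f b)) : ∃! x, x ∈ Ioo a b ∧ f x = y := by
  obtain ⟨x, hx, rfl⟩ := intermediate_value_Ioo hab hcont hy
  exact ⟨x, ⟨hx, rfl⟩, fun x' hx' => hmono.injOn (Ioo_subset_Icc_self hx'.1)
    (Ioo_subset_Icc_self hx) hx'.2⟩

/-- `R` is continuous, vanishes for `E ≤ -2d`, equals `1` for `E ≥ 2d`, is strictly
increasing on `[-2d, 2d]`; consequently for every `ρ ∈ (0,1)` there is a unique
`E ∈ (-2d, 2d)` with `R(E) = ρ`. -/
theorem stmt1 (d : ℕ) (hd : 1 ≤ d) :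
    Continuous (Rfun d) ∧
    (∀ E : ℝ, E ≤ -(2*(d:ℝ)) → Rfun d E = 0) ∧
    (∀ E : ℝ, (2*(d:ℝ)) ≤ E → Rfun d E = 1) ∧
    StrictMonoOn (Rfun d) (Set.Icc (-(2*(d:ℝ))) (2*(d:ℝ))) ∧
    (∀ ρ ∈ Set.Ioo (0:ℝ) 1, ∃! E : ℝ, E ∈ Set.Ioo (-(2*(d:ℝ))) (2*(d:ℝ)) ∧ Rfun d E = ρ) := by
  have hd₀ : d ≠ 0 := by omega
  have hvol : 0 < (2 * π) ^ d := by positivity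
  have hcont : Continuous (Rfun d) := by
    rw [show Rfun d = _ from funext (Rfun_eq_toReal_measure d)]
    exact (continuous_toReal_measure_setOf_lt (continuous_eps d).measurable
      (restrict_brillouinZone_eps_preimage_singleton_eq_zero hd₀)).div_const _
  have hzero (E : ℝ) (hE : E ≤ -(2 * (d : ℝ))) : Rfun d E = 0 := by
    have hempty : {k | eps d k < E} = ∅ :=
      eq_empty_of_forall_notMem fun k hk => not_lt.2 (hE.trans (eps_mem_Icc d k).1) hk
    simp [Rfun_eq_toReal_measure, hempty]
  have hone (E : ℝ) (hE : 2 * (d : ℝ) ≤ E) : Rfun d E = 1 := by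
    rw [Rfun_eq_toReal_measure, measure_setOf_eps_lt_of_le hd₀ hE, volume_brillouinZone,
      ENNReal.toReal_ofReal hvol.le, div_self hvol.ne']
  have hmono : StrictMonoOn (Rfun d) (Icc (-(2 * (d : ℝ))) (2 * d)) := by
    intro E₁ hE₁ E₂ hE₂ h
    rw [Rfun_eq_toReal_measure, Rfun_eq_toReal_measure]
    exact div_lt_div_of_pos_right ((ENNReal.toReal_lt_toReal (measure_ne_top _ _)
      (measure_ne_top _ _)).2 (strictMonoOn_measure_setOf_eps_lt hd₀ hE₁ hE₂ h)) hvol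
  refine ⟨hcont, hzero, hone, hmono, fun ρ hρ => ?_⟩
  exact hmono.existsUnique_mem_Ioo_eq (neg_le_self (by positivity)) hcont.continuousOn
    (by rwa [hzero _ le_rfl, hone _ le_rfl])
end

section
/- For every integer d ≥ 1, the function ρ ↦ ξ(ρ) − ε_F(ρ) is strictly decreasing on (0,1) and strictly positive there; that is, for every ρ ∈ (0,1), (ρ − 1)·ε_F(ρ) − e(ρ) > 0. -/
open MeasureTheory

/-- `(2π)^{-d} ∫_{k ∈ [-π,π]^d, ε(k) < E} ε(k) dk`. -/
noncomputable def en (d : ℕ) (E : ℝ) : ℝ :=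
  (∫ k in {k : Fin d → ℝ | (∀ i, k i ∈ Set.Icc (-Real.pi) Real.pi) ∧ eps d k < E},
    eps d k) / (2 * Real.pi) ^ d

/-!
Since every `cos kᵢ` integrates to zero over the box `[-π, π]^d`, so does `ε`, and therefore
`(R(E) - 1)·E - e(E) = (2π)^{-d} ∫_{[-π,π]^d} (ε - E)⁺`, the energy of the states above `E`.
For `E < 2d = ε(π, …, π)` the set where `ε > E` contains a nonempty open subset of the box, so this
integral is positive and strictly decreasing in `E`. As `R` is monotone, `ε_F` is strictly
increasing in `ρ`, and `(ρ - 1)·ε_F(ρ) - e(ρ)` is strictly decreasing.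
-/

namespace TightBinding

open Set Real Topology

def box (d : ℕ) : Set (Fin d → ℝ) := univ.pi fun _ => Icc (-π) π

variable (d : ℕ)

lemma setOf_mem_Icc_and_eps_lt (E : ℝ) :
    {k : Fin d → ℝ | (∀ i, k i ∈ Icc (-π) π) ∧ eps d k < E} = box d ∩ {k | eps d k < E} := by
  ext k
  simp only [box, mem_ofPred_eq, mem_inter_iff, mem_univ_pi]

lemma Rfun_eq (E : ℝ) : Rfun d E = volume.real (box d ∩ {k | eps d k < E}) / (2 * π) ^ d := by
  rw [Rfun, setOf_mem_Icc_and_eps_lt, measureReal_def]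

lemma en_eq (E : ℝ) : en d E = (∫ k in box d ∩ {k | eps d k < E}, eps d k) / (2 * π) ^ d := by
  rw [en, setOf_mem_Icc_and_eps_lt]

@[fun_prop]
lemma continuous_eps : Continuous (eps d) := by
  unfold eps
  fun_prop

lemma isCompact_box : IsCompact (box d) := isCompact_univ_pi fun _ => isCompact_Icc

lemma measureReal_box : volume.real (box d) = (2 * π) ^ d := by
  simp only [box, measureReal_def, volume_pi_pi, Real.volume_Icc, Finset.prod_const,
    Finset.card_univ, Fintype.card_fin, ENNReal.toReal_pow, ENNReal.toReal_ofReal']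
  rw [sub_neg_eq_add, ← two_mul, max_eq_left (by positivity)]

lemma integrableOn_box {f : (Fin d → ℝ) → ℝ} (hf : Continuous f) : IntegrableOn f (box d) :=
  hf.continuousOn.integrableOn_compact (isCompact_box d)

lemma integral_box_cos_apply (i : Fin d) : ∫ k in box d, cos (k i) = 0 := by
  classical
  let f : Fin d → ℝ → ℝ := fun j x => if j = i then cos x else 1
  have hprod : ∀ k : Fin d → ℝ, cos (k i) = ∏ j, f j (k j) := fun k =>
    (Fintype.prod_ite_eq' i fun j => cos (k j)).symm
  have hcos : ∫ x in Icc (-π) π, f i x = 0 := by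
    simp only [f, if_pos rfl, integral_Icc_eq_integral_Ioc,
      ← intervalIntegral.integral_of_le (neg_le_self pi_pos.le), integral_cos, sin_pi, sin_neg,
      sub_zero, neg_zero]
  simp_rw [hprod]
  rw [box, volume_pi, Measure.restrict_pi_pi, integral_fintype_prod_eq_prod]
  exact Finset.prod_eq_zero (Finset.mem_univ i) hcos

lemma integral_box_eps : ∫ k in box d, eps d k = 0 := by
  simp only [eps]
  rw [integral_const_mul, integral_finsetSum _ fun i _ =>
    integrableOn_box d (by fun_prop : Continuous fun k : Fin d → ℝ => cos (k i))]
  simp [integral_box_cos_apply]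

noncomputable def excessEnergy (E : ℝ) : ℝ :=
  (∫ k in box d, max (eps d k - E) 0) / (2 * π) ^ d

lemma sub_one_mul_sub_en (E : ℝ) : (Rfun d E - 1) * E - en d E = excessEnergy d E := by
  set S := {k : Fin d → ℝ | eps d k < E}
  have hS : MeasurableSet S := measurableSet_lt (continuous_eps d).measurable measurable_const
  have hcont : Continuous fun k => eps d k - E := (continuous_eps d).sub continuous_const
  have hmax : ∀ k, max (eps d k - E) 0 = (eps d k - E) - S.indicator (fun k => eps d k - E) k := by
    intro k
    by_cases hk : k ∈ S
    · rw [indicator_of_mem hk, sub_self, max_eq_right (sub_nonpos.2 (le_of_lt hk))]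
    · rw [indicator_of_notMem hk, sub_zero, max_eq_left (sub_nonneg.2 (not_lt.1 hk))]
  have hsplit : ∫ k in box d, max (eps d k - E) 0
      = (∫ k in box d, (eps d k - E)) - ∫ k in box d ∩ S, (eps d k - E) := by
    simp_rw [hmax]
    rw [integral_sub (integrableOn_box d hcont) ((integrableOn_box d hcont).indicator hS),
      setIntegral_indicator hS]
  have hsub : ∀ s ⊆ box d, ∫ k in s, (eps d k - E) = (∫ k in s, eps d k) - volume.real s * E :=
    fun s hs => by
      rw [integral_sub ((integrableOn_box d (continuous_eps d)).mono_set hs)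
        ((integrableOn_box d continuous_const).mono_set hs), setIntegral_const, smul_eq_mul]
  have h2π : (2 * π) ^ d ≠ 0 := by positivity
  rw [excessEnergy, hsplit, hsub _ subset_rfl, hsub _ inter_subset_left, integral_box_eps,
    measureReal_box, Rfun_eq, en_eq]
  field_simp
  ring

lemma volume_box_inter_lt_eps_pos {E : ℝ} (hE : E < 2 * d) :
    0 < volume (box d ∩ {k | E < eps d k}) := by
  let U := (univ.pi fun _ : Fin d => Ioo (-π) π) ∩ {k | E < eps d k}
  have hU : IsOpen U :=
    (isOpen_set_pi finite_univ fun _ _ => isOpen_Ioo).inter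
      (isOpen_lt continuous_const (continuous_eps d))
  have hcorner : eps d (fun _ => π) = 2 * d := by simp [eps]
  have hne : U.Nonempty := by
    have hmem : (fun _ => π) ∈ closure (univ.pi fun _ : Fin d => Ioo (-π) π) := by
      rw [closure_pi_set, closure_Ioo (by linarith [pi_pos])]
      exact fun _ _ => right_mem_Icc.2 (by linarith [pi_pos])
    have hnhds : {k | E < eps d k} ∈ 𝓝 (fun _ : Fin d => π) :=
      (isOpen_lt continuous_const (continuous_eps d)).mem_nhds (by simpa [hcorner] using hE)
    obtain ⟨k, hk, hk'⟩ := mem_closure_iff_nhds.1 hmem _ hnhds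
    exact ⟨k, hk', hk⟩
  refine (hU.measure_pos volume hne).trans_le (measure_mono ?_)
  exact inter_subset_inter_left _ (pi_mono fun _ _ => Ioo_subset_Icc_self)

lemma setIntegral_box_pos {E : ℝ} (hE : E < 2 * d) {f : (Fin d → ℝ) → ℝ} (hf : Continuous f)
    (hf0 : 0 ≤ f) (hpos : ∀ k, E < eps d k → 0 < f k) : 0 < ∫ k in box d, f k := by
  rw [setIntegral_pos_iff_support_of_nonneg_ae (.of_forall hf0) (integrableOn_box d hf)]
  refine (volume_box_inter_lt_eps_pos d hE).trans_le (measure_mono ?_)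
  rw [inter_comm]
  exact inter_subset_inter_left _ fun k hk => (hpos k hk).ne'

lemma excessEnergy_pos {E : ℝ} (hE : E < 2 * d) : 0 < excessEnergy d E :=
  div_pos (setIntegral_box_pos d hE (by fun_prop) (fun _ => le_max_right _ _)
    fun _ hk => lt_max_of_lt_left (sub_pos.2 hk)) (by positivity)

lemma excessEnergy_strictAntiOn : StrictAntiOn (excessEnergy d) (Iio (2 * d)) := by
  intro E₁ _ E₂ hE₂ h₁₂
  have hint : ∀ E : ℝ, IntegrableOn (fun k => max (eps d k - E) 0) (box d) :=
    fun E => integrableOn_box d (by fun_prop)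
  refine div_lt_div_of_pos_right ?_ (by positivity)
  rw [← sub_pos, ← integral_sub (hint E₁) (hint E₂)]
  refine setIntegral_box_pos d hE₂ (by fun_prop) (fun k => ?_) fun k hk => ?_
  · exact sub_nonneg.2 (max_le_max (by linarith) le_rfl)
  · rw [max_eq_left (by linarith), max_eq_left (by linarith)]
    linarith

lemma Rfun_mono : Monotone (Rfun d) := fun E₁ E₂ h => by
  simp only [Rfun_eq]
  gcongr
  exact ((isCompact_box d).measure_lt_top.trans_le' (measure_mono inter_subset_left)).ne

end TightBinding

open Set TightBinding

theorem stmt5_general (d : ℕ) (εF e : ℝ → ℝ)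
    (hεF : ∀ ρ ∈ Set.Ioo (0:ℝ) 1,
      εF ρ ∈ Set.Ioo (-(2*(d:ℝ))) (2*(d:ℝ)) ∧ Rfun d (εF ρ) = ρ)
    (he : ∀ ρ ∈ Set.Ioo (0:ℝ) 1, e ρ = en d (εF ρ)) :
    StrictAntiOn (fun ρ => (ρ * εF ρ - e ρ) - εF ρ) (Set.Ioo (0:ℝ) 1) ∧
    (∀ ρ ∈ Set.Ioo (0:ℝ) 1, 0 < (ρ - 1) * εF ρ - e ρ) := by
  have hξ : ∀ ρ ∈ Ioo (0:ℝ) 1, (ρ - 1) * εF ρ - e ρ = excessEnergy d (εF ρ) := fun ρ hρ => by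
    rw [he ρ hρ, ← sub_one_mul_sub_en, (hεF ρ hρ).2]
  have hεF_mono : StrictMonoOn εF (Ioo 0 1) := fun a ha b hb hab =>
    lt_of_not_ge fun hba => hab.not_ge (by simpa [(hεF a ha).2, (hεF b hb).2] using Rfun_mono d hba)
  refine ⟨fun a ha b hb hab => ?_, fun ρ hρ => hξ ρ hρ ▸ excessEnergy_pos d (hεF ρ hρ).1.2⟩
  have hanti := excessEnergy_strictAntiOn d (hεF a ha).1.2 (hεF b hb).1.2 (hεF_mono ha hb hab)
  simp only
  linarith [hξ a ha, hξ b hb, hanti]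

/-- With `εF` the Fermi energy, `e` the free-electron energy density and
`ξ(ρ) = ρ·εF(ρ) - e(ρ)`, the function `ρ ↦ ξ(ρ) - εF(ρ)` is strictly decreasing
on `(0,1)` and strictly positive there; i.e. `(ρ-1)·εF(ρ) - e(ρ) > 0` on `(0,1)`. -/
theorem stmt5 (d : ℕ) (hd : 1 ≤ d) (εF e : ℝ → ℝ)
    (hεF : ∀ ρ ∈ Set.Ioo (0:ℝ) 1,
      εF ρ ∈ Set.Ioo (-(2*(d:ℝ))) (2*(d:ℝ)) ∧ Rfun d (εF ρ) = ρ)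
    (he : ∀ ρ ∈ Set.Ioo (0:ℝ) 1, e ρ = en d (εF ρ)) :
    StrictAntiOn (fun ρ => (ρ * εF ρ - e ρ) - εF ρ) (Set.Ioo (0:ℝ) 1) ∧
    (∀ ρ ∈ Set.Ioo (0:ℝ) 1, 0 < (ρ - 1) * εF ρ - e ρ) :=
  stmt5_general d εF e hεF he
end

section
/- Let d ≥ 1, let A ⊆ ℤ^d be a finite nonempty set, and let n ≥ 2 be an integer. Then #{x ∈ ℤ^d : dist₁(x, A) = n} ≤ d · #{x ∈ ℤ^d : dist₁(x, A) = n − 1}. -/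
/-- The `ℓ¹` distance `|x - y|₁ = Σᵢ |xᵢ - yᵢ|` on `ℤ^d`. -/
def dist1 {d : ℕ} (x y : Fin d → ℤ) : ℕ := ∑ i, (x i - y i).natAbs

/-- `dist₁(x, A) = min_{a ∈ A} |x - a|₁`. -/
noncomputable def distA {d : ℕ} (x : Fin d → ℤ) (A : Set (Fin d → ℤ)) : ℕ :=
  sInf {n | ∃ a ∈ A, dist1 x a = n}

/-!
Send a point `x` at distance `n ≥ 1` from `A` to `(y, k)`, where `y` is `x` moved by one unit
along the coordinate `k` towards a nearest point `a` of `A`; then `y` is at distance `n - 1`.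
For `n ≥ 2` this map is injective if `a` and `k` are chosen well. Two points with the same image
`(y, k)` are `y ± e_k`; if their nearest points are chosen by a fixed tie-break, both have the
same nearest point `a`, with `a_k = y_k`. Then `x - a` and `x' - a` differ only in the sign of
their `k`-th coordinate, which is `±1`, and `k` is chosen by a rule (`pivot`) that picks a
different coordinate after such a sign flip: from two points `p ≠ q` of the support that depend
only on the support, take `q` if `z_p` and `z_q` have opposite signs, and `p` otherwise.
-/

open Function

theorem sign_sub_cases {u v : ℤ} (h : u ≠ v) :
    ((u - v).sign = 1 ∧ v < u) ∨ ((u - v).sign = -1 ∧ u < v) := by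
  rcases lt_or_gt_of_ne h with h | h
  · exact .inr ⟨Int.sign_eq_neg_one_of_neg (by omega), h⟩
  · exact .inl ⟨Int.sign_eq_one_of_pos (by omega), h⟩

section Pivot

variable {ι : Type*} [Nonempty ι]

noncomputable def pivot (z : ι → ℤ) : ι :=
  let p := Classical.epsilon (· ∈ support z)
  let q := Classical.epsilon fun j => j ∈ support z ∧ j ≠ p
  if (z q).sign = -(z p).sign then q else p

theorem pivot_mem_support {z : ι → ℤ} (hz : z ≠ 0) : z (pivot z) ≠ 0 := by
  have hp : Classical.epsilon (· ∈ support z) ∈ support z :=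
    Classical.epsilon_spec (support_nonempty_iff.2 hz)
  unfold pivot
  dsimp only
  split_ifs with h
  · intro h0
    rw [h0, Int.sign_zero, zero_eq_neg, Int.sign_eq_zero_iff_zero] at h
    exact hp h
  · exact hp

theorem pivot_update_ne [DecidableEq ι] {z : ι → ℤ} {k : ι} (hk : pivot z = k) (hzk : z k = 1)
    (hj : ∃ j ≠ k, z j ≠ 0) : pivot (update z k (-1)) ≠ k := by
  have hsupp : support (update z k (-1)) = support z := by
    ext i
    rcases eq_or_ne i k with rfl | hi <;> simp [update_of_ne, *]
  intro hk'
  unfold pivot at hk hk'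
  rw [hsupp] at hk'
  dsimp only at hk hk'
  generalize Classical.epsilon (· ∈ support z) = p at hk hk'
  have hq : (∃ j, j ∈ support z ∧ j ≠ p) →
      Classical.epsilon (fun j => j ∈ support z ∧ j ≠ p) ∈ support z ∧
        Classical.epsilon (fun j => j ∈ support z ∧ j ≠ p) ≠ p :=
    Classical.epsilon_spec
  generalize Classical.epsilon (fun j => j ∈ support z ∧ j ≠ p) = q at hk hk' hq
  by_cases h : (z q).sign = -(z p).sign
  · rw [if_pos h] at hk
    subst hk
    rcases eq_or_ne p q with rfl | hpq
    · simp [hzk] at h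
    · rw [update_of_ne hpq] at hk'
      split_ifs at hk' with h'
      · simp only [update_self, hzk, Int.sign_one, Int.sign_neg] at h h'
        omega
      · exact hpq hk'
  · rw [if_neg h] at hk
    subst hk
    obtain ⟨j, hjp, hj⟩ := hj
    obtain ⟨hzq, hqp⟩ := hq ⟨j, hj, hjp⟩
    rw [update_of_ne hqp] at hk'
    split_ifs at hk' with h'
    · exact hqp hk'
    · simp only [update_self, hzk, Int.sign_one, Int.reduceNeg, Int.sign_neg, neg_neg] at h h'
      rcases Int.sign_trichotomy (z q) with h1 | h1 | h1
      · exact h' h1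
      · exact hzq (Int.sign_eq_zero_iff_zero.1 h1)
      · exact h h1

end Pivot

section Distance

variable {d : ℕ}

theorem dist1_comm (x y : Fin d → ℤ) : dist1 x y = dist1 y x := by
  unfold dist1
  congr 1
  ext i
  omega

theorem dist1_self (x : Fin d → ℤ) : dist1 x x = 0 := by
  simp [dist1]

theorem dist1_triangle (x y b : Fin d → ℤ) : dist1 x b ≤ dist1 x y + dist1 y b := by
  unfold dist1
  rw [← Finset.sum_add_distrib]
  exact Finset.sum_le_sum fun i _ => by omega

theorem dist1_update_add (x b : Fin d → ℤ) (k : Fin d) (v : ℤ) :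
    dist1 (update x k v) b + (x k - b k).natAbs = dist1 x b + (v - b k).natAbs := by
  unfold dist1
  rw [← Finset.sum_erase_add _ _ (Finset.mem_univ k),
    ← Finset.sum_erase_add Finset.univ (fun i => (x i - b i).natAbs) (Finset.mem_univ k),
    Finset.sum_congr rfl fun i hi => by rw [update_of_ne (Finset.ne_of_mem_erase hi)],
    update_self]
  ring

theorem dist1_eq_natAbs_of_forall_ne {x b : Fin d → ℤ} {k : Fin d}
    (h : ∀ j ≠ k, x j = b j) : dist1 x b = (x k - b k).natAbs :=
  Finset.sum_eq_single k (fun j _ hj => by simp [h j hj]) (by simp)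

theorem finite_setOf_dist1_le (b : Fin d → ℤ) (m : ℕ) : {x | dist1 x b ≤ m}.Finite := by
  refine (Set.Finite.pi fun i => Set.finite_Icc (b i - m) (b i + m)).subset fun x hx i _ => ?_
  have hi : (x i - b i).natAbs ≤ dist1 x b :=
    Finset.single_le_sum (f := fun i => (x i - b i).natAbs) (fun _ _ => Nat.zero_le _)
      (Finset.mem_univ i)
  have hm : dist1 x b ≤ m := hx
  constructor <;> omega

end Distance

section DistanceToSet

variable {d : ℕ} {A : Set (Fin d → ℤ)}

theorem distA_le_dist1 (x : Fin d → ℤ) {b : Fin d → ℤ} (hb : b ∈ A) : distA x A ≤ dist1 x b :=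
  Nat.sInf_le ⟨b, hb, rfl⟩

theorem exists_dist1_eq_distA (hne : A.Nonempty) (x : Fin d → ℤ) :
    ∃ a ∈ A, dist1 x a = distA x A := by
  obtain ⟨a, ha⟩ := hne
  exact Nat.sInf_mem (⟨dist1 x a, a, ha, rfl⟩ : {n | ∃ a ∈ A, dist1 x a = n}.Nonempty)

theorem distA_le_dist1_add (hne : A.Nonempty) (x y : Fin d → ℤ) :
    distA x A ≤ dist1 x y + distA y A := by
  obtain ⟨b, hb, hyb⟩ := exists_dist1_eq_distA hne y
  calc distA x A ≤ dist1 x b := distA_le_dist1 x hb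
    _ ≤ dist1 x y + dist1 y b := dist1_triangle x y b
    _ = dist1 x y + distA y A := by rw [hyb]

theorem finite_setOf_distA_eq (hfin : A.Finite) (hne : A.Nonempty) (m : ℕ) :
    {x | distA x A = m}.Finite := by
  refine (hfin.biUnion fun b _ => finite_setOf_dist1_le b m).subset fun x hx => ?_
  obtain ⟨a, ha, hxa⟩ := exists_dist1_eq_distA hne x
  exact Set.mem_biUnion ha (show dist1 x a ≤ m by rw [hxa]; exact le_of_eq hx)

-- Ties are broken by `Encodable.encode`; this is what makes `nearest_eq_nearest` hold.
noncomputable def nearest (hne : A.Nonempty) (x : Fin d → ℤ) : Fin d → ℤ :=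
  argminOn (fun a => toLex (dist1 x a, Encodable.encode a)) A hne

variable (hne : A.Nonempty)

theorem nearest_mem (x : Fin d → ℤ) : nearest hne x ∈ A :=
  argminOn_mem _ _ _

theorem nearest_le {x b : Fin d → ℤ} (hb : b ∈ A) :
    toLex (dist1 x (nearest hne x), Encodable.encode (nearest hne x))
      ≤ toLex (dist1 x b, Encodable.encode b) :=
  argminOn_le (fun a => toLex (dist1 x a, Encodable.encode a)) A hb

theorem dist1_nearest (x : Fin d → ℤ) : dist1 x (nearest hne x) = distA x A := by
  obtain ⟨b, hb, hxb⟩ := exists_dist1_eq_distA hne x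
  refine le_antisymm ?_ (distA_le_dist1 x (nearest_mem hne x))
  rcases Prod.Lex.le_iff.1 (nearest_le hne (x := x) hb) with h | ⟨h, -⟩
  · exact hxb ▸ h.le
  · exact hxb ▸ h.le

theorem nearest_eq_nearest {x x' : Fin d → ℤ} (h : dist1 x (nearest hne x') = distA x A)
    (h' : dist1 x' (nearest hne x) = distA x' A) : nearest hne x = nearest hne x' := by
  have key : ∀ {x x'}, dist1 x (nearest hne x') = distA x A →
      Encodable.encode (nearest hne x) ≤ Encodable.encode (nearest hne x') := by
    intro x x' h
    rcases Prod.Lex.le_iff.1 (nearest_le hne (x := x) (nearest_mem hne x')) with hlt | ⟨-, hle⟩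
    · simp only [ofLex_toLex, dist1_nearest, h, lt_self_iff_false] at hlt
    · exact hle
  exact Encodable.encode_injective (le_antisymm (key h) (key h'))

theorem nearest_update_sub_two {x : Fin d → ℤ} {k : Fin d}
    (hx' : distA (update x k (x k - 2)) A = distA x A) (hpos : nearest hne x k < x k)
    (hneg : x k - 2 < nearest hne (update x k (x k - 2)) k) :
    x k - nearest hne x k = 1 ∧ nearest hne (update x k (x k - 2)) = nearest hne x := by
  have hd := dist1_update_add x (nearest hne x) k (x k - 2)
  have hd' := dist1_update_add (update x k (x k - 2)) (nearest hne (update x k (x k - 2))) k (x k)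
  rw [update_idem, update_eq_self, update_self] at hd'
  have h1 := distA_le_dist1 (update x k (x k - 2)) (nearest_mem hne x)
  have h2 := distA_le_dist1 x (nearest_mem hne (update x k (x k - 2)))
  have h3 := dist1_nearest hne x
  have h4 := dist1_nearest hne (update x k (x k - 2))
  exact ⟨by omega, nearest_eq_nearest hne (by omega) (by omega)⟩

end DistanceToSet

section Descent

variable {d : ℕ}

def stepToward (x a : Fin d → ℤ) (k : Fin d) : Fin d → ℤ :=
  update x k (x k - (x k - a k).sign)

theorem dist1_stepToward_add_one {x a : Fin d → ℤ} {k : Fin d} (h : x k ≠ a k) :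
    dist1 (stepToward x a k) a + 1 = dist1 x a := by
  have := dist1_update_add x a k (x k - (x k - a k).sign)
  rw [stepToward]
  rcases sign_sub_cases h with ⟨hs, _⟩ | ⟨hs, _⟩ <;> rw [hs] at this ⊢ <;> omega

theorem dist1_stepToward {x a : Fin d → ℤ} {k : Fin d} (h : x k ≠ a k) :
    dist1 x (stepToward x a k) = 1 := by
  have := dist1_update_add x x k (x k - (x k - a k).sign)
  rw [dist1_self, sub_self, Int.natAbs_zero, add_zero] at this
  rw [dist1_comm, stepToward, this]
  rcases sign_sub_cases h with ⟨hs, -⟩ | ⟨hs, -⟩ <;> rw [hs] <;> omega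

theorem eq_of_stepToward_eq {x x' a a' : Fin d → ℤ} {k : Fin d}
    (h : stepToward x a k = stepToward x' a' k) (hs : (x k - a k).sign = (x' k - a' k).sign) :
    x = x' := by
  have hk : x k = x' k := by
    have := congrFun h k
    simp only [stepToward, update_self, hs] at this
    omega
  calc x = update (stepToward x a k) k (x k) := by rw [stepToward, update_idem, update_eq_self]
    _ = x' := by rw [h, stepToward, update_idem, hk, update_eq_self]

variable {A : Set (Fin d → ℤ)} (hne : A.Nonempty)

theorem distA_stepToward_nearest_add_one {x : Fin d → ℤ} {k : Fin d}
    (h : x k ≠ nearest hne x k) : distA (stepToward x (nearest hne x) k) A + 1 = distA x A := by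
  have hle := distA_le_dist1 (stepToward x (nearest hne x) k) (nearest_mem hne x)
  have hge := distA_le_dist1_add hne x (stepToward x (nearest hne x) k)
  have := dist1_stepToward_add_one h
  rw [dist1_stepToward h] at hge
  rw [dist1_nearest] at this
  omega

variable [Nonempty (Fin d)]

noncomputable def descentIndex (x : Fin d → ℤ) : Fin d :=
  pivot (x - nearest hne x)

noncomputable def descent (x : Fin d → ℤ) : (Fin d → ℤ) × Fin d :=
  (stepToward x (nearest hne x) (descentIndex hne x), descentIndex hne x)

theorem ne_nearest_descentIndex {x : Fin d → ℤ} (hx : distA x A ≠ 0) :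
    x (descentIndex hne x) ≠ nearest hne x (descentIndex hne x) := by
  have hxa : x - nearest hne x ≠ 0 := by
    intro h
    rw [sub_eq_zero] at h
    rw [← dist1_nearest hne, ← h, dist1_self] at hx
    exact hx rfl
  exact sub_ne_zero.1 (pivot_mem_support hxa)

theorem descent_mapsTo {n : ℕ} (hn : 1 ≤ n) :
    Set.MapsTo (descent hne) {x | distA x A = n} ({y | distA y A = n - 1} ×ˢ Set.univ) := by
  intro x (hx : distA x A = n)
  have := distA_stepToward_nearest_add_one hne (ne_nearest_descentIndex hne (x := x) (by omega))
  exact ⟨show distA (stepToward x _ _) A = n - 1 by omega, trivial⟩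

theorem stepToward_ne_of_lt_of_gt {x x' : Fin d → ℤ} {n : ℕ} {k : Fin d} (hn : 2 ≤ n)
    (hx : distA x A = n) (hx' : distA x' A = n)
    (hk : descentIndex hne x = k) (hk' : descentIndex hne x' = k)
    (hpos : nearest hne x k < x k) (hneg : x' k < nearest hne x' k) :
    stepToward x (nearest hne x) k ≠ stepToward x' (nearest hne x') k := by
  intro heq
  rw [stepToward, stepToward, Int.sign_eq_one_of_pos (by omega),
    Int.sign_eq_neg_one_of_neg (by omega)] at heq
  have hx'k : x' k = x k - 2 := by
    have := congrFun heq k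
    simp only [update_self] at this
    omega
  obtain rfl : x' = update x k (x k - 2) := by
    rw [← update_eq_self k x', ← update_idem (x' k - -1), ← heq, update_idem, hx'k]
  rw [hx'k] at hneg
  obtain ⟨hxa, haa⟩ := nearest_update_sub_two hne (hx'.trans hx.symm) hpos hneg
  have hz : update x k (x k - 2) - nearest hne (update x k (x k - 2))
      = update (x - nearest hne x) k (-1) := by
    rw [haa]
    ext i
    rcases eq_or_ne i k with rfl | hi
    · simp only [Pi.sub_apply, update_self]
      omega
    · simp only [Pi.sub_apply, update_of_ne hi]
  have hj : ∃ j ≠ k, (x - nearest hne x) j ≠ 0 := by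
    by_contra! hall
    have := dist1_eq_natAbs_of_forall_ne fun j hj => sub_eq_zero.1 (hall j hj)
    rw [dist1_nearest, hx] at this
    omega
  exact pivot_update_ne hk hxa hj (hz ▸ hk')

theorem descent_injOn {n : ℕ} (hn : 2 ≤ n) : Set.InjOn (descent hne) {x | distA x A = n} := by
  intro x hx x' hx' heq
  obtain ⟨hstep, hk⟩ := Prod.mk.inj heq
  have hxk := ne_nearest_descentIndex hne (x := x) (by rw [hx]; omega)
  have hxk' := ne_nearest_descentIndex hne (x := x') (by rw [hx']; omega)
  rw [← hk] at hxk' hstep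
  rcases sign_sub_cases hxk with ⟨hs, hlt⟩ | ⟨hs, hlt⟩ <;>
    rcases sign_sub_cases hxk' with ⟨hs', hlt'⟩ | ⟨hs', hlt'⟩
  · exact eq_of_stepToward_eq hstep (hs.trans hs'.symm)
  · exact absurd hstep (stepToward_ne_of_lt_of_gt hne hn hx hx' rfl hk.symm hlt hlt')
  · exact absurd hstep.symm (stepToward_ne_of_lt_of_gt hne hn hx' hx hk.symm rfl hlt' hlt)
  · exact eq_of_stepToward_eq hstep (hs.trans hs'.symm)

end Descent

/-- For a finite nonempty `A ⊆ ℤ^d` and `n ≥ 2`, the number of points at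
`ℓ¹`-distance `n` from `A` is at most `d` times the number of points at
distance `n - 1`. -/
theorem stmt9 (d : ℕ) (hd : 1 ≤ d) (A : Set (Fin d → ℤ))
    (hfin : A.Finite) (hne : A.Nonempty) (n : ℕ) (hn : 2 ≤ n) :
    {x : Fin d → ℤ | distA x A = n}.ncard ≤
      d * {x : Fin d → ℤ | distA x A = n - 1}.ncard := by
  have : NeZero d := ⟨by omega⟩
  calc {x : Fin d → ℤ | distA x A = n}.ncard
      ≤ ({x : Fin d → ℤ | distA x A = n - 1} ×ˢ (Set.univ : Set (Fin d))).ncard :=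
        Set.ncard_le_ncard_of_injOn (descent hne) (descent_mapsTo hne (by omega))
          (descent_injOn hne hn) ((finite_setOf_distA_eq hfin hne _).prod Set.finite_univ)
    _ = d * {x : Fin d → ℤ | distA x A = n - 1}.ncard := by
        rw [Set.ncard_prod, Set.ncard_univ, Nat.card_eq_fintype_card, Fintype.card_fin, mul_comm]
end

section
/- For every integer d ≥ 1 and every integer N ≥ 1, there exists a finite set A ⊆ ℤ^d with |A| = N and B(A) ≤ 4d · N^{1 − 1/d}, where N^{1 − 1/d} denotes the real power. -/
noncomputable def bdry {d : ℕ} (A : Set (Fin d → ℤ)) : ℕ :=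
  Set.ncard {p : (Fin d → ℤ) × (Fin d → ℤ) | p.1 ∈ A ∧ p.2 ∉ A ∧ dist1 p.1 p.2 = 1}

open Finset

section Boundary

variable {d : ℕ}

lemma eq_add_single_or_eq_sub_single_of_dist1_eq_one {x y : Fin d → ℤ} (h : dist1 x y = 1) :
    ∃ i, y = x + Pi.single i 1 ∨ y = x - Pi.single i 1 := by
  unfold dist1 at h
  obtain ⟨i, -, hi⟩ := exists_ne_zero_of_sum_ne_zero (s := univ)
    (f := fun j => (x j - y j).natAbs) (by omega)
  have hsplit := add_sum_erase univ (fun j => (x j - y j).natAbs) (mem_univ i)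
  have hrest : ∑ j ∈ univ.erase i, (x j - y j).natAbs = 0 := by omega
  have hi' : (x i - y i).natAbs = 1 := by omega
  have hoff : ∀ j ≠ i, y j = x j := fun j hj => by
    have := (sum_eq_zero_iff.1 hrest) j (mem_erase.2 ⟨hj, mem_univ j⟩)
    omega
  refine ⟨i, ?_⟩
  rcases Int.natAbs_eq_iff.1 hi' with hy | hy
  · right
    funext j
    rcases eq_or_ne j i with rfl | hj
    · simp; omega
    · simp [hj, hoff j hj]
  · left
    funext j
    rcases eq_or_ne j i with rfl | hj
    · simp; omega
    · simp [hj, hoff j hj]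

lemma bdry_le_sum_card_filter (A : Finset (Fin d → ℤ)) :
    bdry (A : Set (Fin d → ℤ)) ≤
      ∑ i, (#{x ∈ A | x + Pi.single i 1 ∉ A} + #{x ∈ A | x - Pi.single i 1 ∉ A}) := by
  set E : Finset ((Fin d → ℤ) × (Fin d → ℤ)) := univ.biUnion fun i =>
    {x ∈ A | x + Pi.single i 1 ∉ A}.image (fun x => (x, x + Pi.single i 1)) ∪
      {x ∈ A | x - Pi.single i 1 ∉ A}.image (fun x => (x, x - Pi.single i 1))
  have hsub : {p : (Fin d → ℤ) × (Fin d → ℤ) | p.1 ∈ (A : Set (Fin d → ℤ)) ∧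
      p.2 ∉ (A : Set (Fin d → ℤ)) ∧ dist1 p.1 p.2 = 1} ⊆ E := by
    rintro ⟨x, y⟩ ⟨hx, hy, hxy : dist1 x y = 1⟩
    obtain ⟨i, rfl | rfl⟩ := eq_add_single_or_eq_sub_single_of_dist1_eq_one hxy
    · exact mem_biUnion.2 ⟨i, mem_univ i, mem_union_left _ (mem_image_of_mem _ (by simp_all))⟩
    · exact mem_biUnion.2 ⟨i, mem_univ i, mem_union_right _ (mem_image_of_mem _ (by simp_all))⟩
  calc bdry (A : Set (Fin d → ℤ)) ≤ (E : Set _).ncard := Set.ncard_le_ncard hsub E.finite_toSet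
    _ = #E := Set.ncard_coe_finset E
    _ ≤ _ := card_biUnion_le.trans <| sum_le_sum fun i _ =>
      (card_union_le _ _).trans (add_le_add card_image_le card_image_le)

end Boundary

section OrthantLowerSet

variable {ι : Type*} [Fintype ι] [DecidableEq ι]

def IsOrthantLowerSet (A : Finset (ι → ℤ)) : Prop :=
  ∀ x ∈ A, 0 ≤ x ∧ Set.Icc 0 x ⊆ A

namespace IsOrthantLowerSet

variable {A : Finset (ι → ℤ)}

lemma card_filter_sub_single_notMem_le (hA : IsOrthantLowerSet A) (i : ι) :
    #{x ∈ A | x - Pi.single i 1 ∉ A} ≤ #{x ∈ A | x i = 0} := by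
  refine card_le_card fun x hx => ?_
  rw [mem_filter] at hx ⊢
  have hx0 : ∀ j, 0 ≤ x j := (hA x hx.1).1
  refine ⟨hx.1, by_contra fun hxi => hx.2 ((hA x hx.1).2 ⟨fun j => ?_, ?_⟩)⟩
  · rcases eq_or_ne j i with rfl | hj
    · have := hx0 j
      simp; omega
    · simpa [hj] using hx0 j
  · exact sub_le_self _ (Pi.single_nonneg.2 zero_le_one)

lemma card_filter_add_single_notMem_le (hA : IsOrthantLowerSet A) (i : ι) :
    #{x ∈ A | x + Pi.single i 1 ∉ A} ≤ #{x ∈ A | x i = 0} := by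
  -- of two points of `A` on a line parallel to `eᵢ`, the lower one has its `+eᵢ` neighbour in `A`
  have below {u v : ι → ℤ} (hu : u ∈ A) (hv : v ∈ A) (hoff : ∀ j ≠ i, u j = v j)
      (hlt : u i < v i) : u + Pi.single i 1 ∈ A := by
    refine (hA v hv).2 ⟨add_nonneg (hA u hu).1 (Pi.single_nonneg.2 zero_le_one), fun j => ?_⟩
    rcases eq_or_ne j i with rfl | hj
    · simpa using hlt
    · simp [hj, hoff j hj]
  refine card_le_card_of_injOn (Function.update · i 0) (fun x hx => ?_) fun x hx y hy hxy => ?_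
  · rw [coe_filter] at hx
    have hx0 : ∀ j, 0 ≤ x j := (hA x hx.1).1
    refine mem_filter.2 ⟨(hA x hx.1).2 ⟨fun j => ?_, fun j => ?_⟩, by simp⟩ <;>
      rcases eq_or_ne j i with rfl | hj <;> simp [*]
  · rw [coe_filter] at hx hy
    have hoff : ∀ j ≠ i, x j = y j := fun j hj => by simpa [hj] using congrFun hxy j
    rcases lt_trichotomy (x i) (y i) with h | h | h
    · exact (hx.2 (below hx.1 hy.1 hoff h)).elim
    · funext j
      rcases eq_or_ne j i with rfl | hj
      exacts [h, hoff j hj]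
    · exact (hy.2 (below hy.1 hx.1 (fun j hj => (hoff j hj).symm) h)).elim

end IsOrthantLowerSet

end OrthantLowerSet

lemma IsOrthantLowerSet.bdry_le {d : ℕ} {A : Finset (Fin d → ℤ)} (hA : IsOrthantLowerSet A) :
    bdry (A : Set (Fin d → ℤ)) ≤ 2 * ∑ i, #{x ∈ A | x i = 0} := by
  refine (bdry_le_sum_card_filter A).trans ?_
  rw [mul_sum]
  exact sum_le_sum fun i _ => by
    linarith [hA.card_filter_add_single_notMem_le i, hA.card_filter_sub_single_notMem_le i]

lemma Finset.exists_subset_card_eq_of_forall_le_mem {α : Type*} [PartialOrder α]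
    (s : Finset α) {n : ℕ} (hn : n ≤ #s) : ∃ t ⊆ s, #t = n ∧ ∀ x ∈ t, ∀ y ∈ s, y ≤ x → y ∈ t := by
  classical
  induction s using Finset.strongInduction with
  | H s ih =>
    rcases hn.eq_or_lt with rfl | hlt
    · exact ⟨s, subset_rfl, rfl, fun _ _ _ hy _ => hy⟩
    obtain ⟨m, hm⟩ := s.exists_maximal (card_pos.1 (by omega))
    obtain ⟨t, hts, htn, ht⟩ :=
      ih (s.erase m) (erase_ssubset hm.prop) (by rw [card_erase_of_mem hm.prop]; omega)
    refine ⟨t, hts.trans (erase_subset m s), htn, fun x hx y hy hyx => ht x hx y ?_ hyx⟩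
    refine mem_erase.2 ⟨?_, hy⟩
    rintro rfl
    have hx' := mem_erase.1 (hts hx)
    exact hx'.1 (hm.eq_of_le hx'.2 hyx).symm

lemma IsOrthantLowerSet.exists_subset_card_eq {ι : Type*} {A : Finset (ι → ℤ)}
    (hA : IsOrthantLowerSet A) {n : ℕ} (hn : n ≤ #A) : ∃ B ⊆ A, #B = n ∧ IsOrthantLowerSet B := by
  obtain ⟨B, hBA, hBn, hB⟩ := A.exists_subset_card_eq_of_forall_le_mem hn
  exact ⟨B, hBA, hBn, fun x hx => ⟨(hA x (hBA hx)).1,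
    fun y hy => hB x hx y ((hA x (hBA hx)).2 hy) hy.2⟩⟩

section Box

variable {ι : Type*} [Fintype ι] [DecidableEq ι]

noncomputable def orthantBox (a : ι → ℕ) : Finset (ι → ℤ) :=
  Fintype.piFinset fun j => Ico 0 (a j : ℤ)

lemma isOrthantLowerSet_orthantBox (a : ι → ℕ) : IsOrthantLowerSet (orthantBox a) := by
  intro x hx
  simp only [orthantBox, Fintype.mem_piFinset, mem_Ico] at hx
  refine ⟨fun j => (hx j).1, fun y hy => ?_⟩
  simp only [orthantBox, mem_coe, Fintype.mem_piFinset, mem_Ico]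
  exact fun j => ⟨hy.1 j, (hy.2 j).trans_lt (hx j).2⟩

lemma card_orthantBox (a : ι → ℕ) : #(orthantBox a) = ∏ j, a j := by
  simp [orthantBox]

lemma card_filter_orthantBox_mul_le (a : ι → ℕ) (i : ι) :
    #{x ∈ orthantBox a | x i = 0} * a i ≤ ∏ j, a j := by
  have hsub : {x ∈ orthantBox a | x i = 0} ⊆
      Fintype.piFinset (Function.update (fun j => Ico 0 (a j : ℤ)) i {0}) := by
    intro x hx
    simp only [orthantBox, mem_filter, Fintype.mem_piFinset] at hx ⊢
    intro j
    rcases eq_or_ne j i with rfl | hj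
    · simp [hx.2]
    · simpa [hj] using hx.1 j
  calc #{x ∈ orthantBox a | x i = 0} * a i ≤ (∏ j ∈ univ.erase i, a j) * a i := by
        refine Nat.mul_le_mul_right _ ((card_le_card hsub).trans (le_of_eq ?_))
        rw [Fintype.card_piFinset, ← prod_erase_mul _ _ (mem_univ i), Function.update_self,
          card_singleton, mul_one]
        exact prod_congr rfl fun j hj => by simp [ne_of_mem_erase hj]
    _ = ∏ j, a j := prod_erase_mul _ _ (mem_univ i)

end Box

lemma pow_succ_add_pow_sub_one_le {k : ℕ} (hk : 1 ≤ k) {t : ℝ} (hkt : k ≤ t) (htk : t < k + 1)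
    (n : ℕ) : t ^ (n + 1) + (k : ℝ) ^ n - 1 ≤ 2 * k * t ^ n := by
  have hkn : (k : ℝ) ^ n ≤ t ^ n := pow_le_pow_left₀ (Nat.cast_nonneg k) hkt n
  have hk1 : (k : ℝ) ^ n - 1 ≤ (k : ℝ) ^ n * (k - 1) := by
    rcases hk.eq_or_lt with rfl | hk2
    · simp
    · have : (2 : ℝ) ≤ k := by exact_mod_cast hk2
      nlinarith [pow_nonneg (Nat.cast_nonneg (α := ℝ) k) n]
  have hk1' : (1 : ℝ) ≤ k := by exact_mod_cast hk
  calc t ^ (n + 1) + (k : ℝ) ^ n - 1 ≤ t ^ (n + 1) + (k : ℝ) ^ n * (2 * k - t) := by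
        nlinarith [pow_nonneg (Nat.cast_nonneg (α := ℝ) k) n]
    _ ≤ t ^ (n + 1) + t ^ n * (2 * k - t) := by gcongr; linarith
    _ = 2 * k * t ^ n := by ring

lemma exists_sides_prod_le_two_mul_rpow {d N : ℕ} (hd : 1 ≤ d) (hN : 1 ≤ N) :
    ∃ (k : ℕ) (a : Fin d → ℕ), 0 < k ∧ (∀ j, k ≤ a j) ∧ N ≤ ∏ j, a j ∧
      ((∏ j, a j : ℕ) : ℝ) ≤ 2 * k * (N : ℝ) ^ ((1 : ℝ) - 1 / d) := by
  obtain ⟨n, rfl⟩ : ∃ n, d = n + 1 := ⟨d - 1, by omega⟩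
  have hN0 : (0 : ℝ) < N := by exact_mod_cast hN
  set t : ℝ := (N : ℝ) ^ ((n + 1 : ℕ) : ℝ)⁻¹
  have ht0 : 0 < t := by positivity
  have ht : t ^ (n + 1) = N := Real.rpow_inv_natCast_pow hN0.le n.succ_ne_zero
  have hM : (N : ℝ) ^ ((1 : ℝ) - 1 / (n + 1 : ℕ)) = t ^ n := by
    rw [Real.rpow_sub hN0, Real.rpow_one, one_div]
    change (N : ℝ) / t = t ^ n
    rw [← ht, pow_succ, mul_div_cancel_right₀ _ ht0.ne']
  set k := ⌊t⌋₊
  have hk : 1 ≤ k := Nat.one_le_floor_iff _ |>.2 <|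
    Real.one_le_rpow (by exact_mod_cast hN) (by positivity)
  have hkt : (k : ℝ) ≤ t := Nat.floor_le ht0.le
  have hkN : k ^ (n + 1) ≤ N := by
    exact_mod_cast ht ▸ pow_le_pow_left₀ (Nat.cast_nonneg k) hkt (n + 1)
  have hK : 0 < k ^ n := pow_pos hk n
  set m := N ⌈/⌉ k ^ n
  have hNm : N ≤ k ^ n * m := le_smul_ceilDiv hK
  -- the `- 1` from integrality is needed when `k = 1`
  have hmN : k ^ n * m ≤ N + k ^ n - 1 := by
    rw [show m = (N + k ^ n - 1) / k ^ n from Nat.ceilDiv_eq_add_pred_div _ _]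
    exact Nat.mul_div_le _ _
  set a : Fin (n + 1) → ℕ := Function.update (fun _ => k) 0 m
  have hprod : ∏ j, a j = k ^ n * m := by
    simp only [a]
    rw [prod_update_of_mem (mem_univ 0), prod_const, ← compl_eq_univ_sdiff, card_compl]
    simp [mul_comm]
  refine ⟨k, a, hk, fun j => ?_, hprod.symm ▸ hNm, ?_⟩
  · rcases eq_or_ne j 0 with rfl | hj
    · simp only [a, Function.update_self]
      exact le_of_mul_le_mul_left (by rw [← pow_succ]; omega) hK
    · simp [a, Function.update_of_ne hj]
  · rw [hprod, hM]
    have : ((k ^ n * m : ℕ) : ℝ) ≤ N + (k : ℝ) ^ n - 1 := by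
      have : ((k ^ n * m : ℕ) : ℝ) ≤ ((N + k ^ n - 1 : ℕ) : ℝ) := by exact_mod_cast hmN
      rwa [Nat.cast_sub (by omega), Nat.cast_add, Nat.cast_pow, Nat.cast_one] at this
    exact this.trans (ht ▸ pow_succ_add_pow_sub_one_le hk hkt (Nat.lt_floor_add_one t) n)

/-- For every `d ≥ 1` and `N ≥ 1` there is a finite `A ⊆ ℤ^d` with `|A| = N` and
`B(A) ≤ 4d · N^{1 - 1/d}` (real power). -/
theorem stmt11 (d N : ℕ) (hd : 1 ≤ d) (hN : 1 ≤ N) :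
    ∃ A : Finset (Fin d → ℤ), A.card = N ∧
      (bdry (↑A : Set (Fin d → ℤ)) : ℝ) ≤ 4 * d * (N : ℝ) ^ ((1:ℝ) - 1/(d:ℝ)) := by
  obtain ⟨k, a, hk, hka, hNa, haM⟩ := exists_sides_prod_le_two_mul_rpow hd hN
  obtain ⟨A, hAa, hAN, hA⟩ :=
    (isOrthantLowerSet_orthantBox a).exists_subset_card_eq (n := N) (by rwa [card_orthantBox])
  refine ⟨A, hAN, ?_⟩
  set M := (N : ℝ) ^ ((1:ℝ) - 1/(d:ℝ))
  have hface (i : Fin d) : (#{x ∈ A | x i = 0} : ℝ) ≤ 2 * M := by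
    have hfa : #{x ∈ A | x i = 0} * k ≤ ∏ j, a j :=
      (Nat.mul_le_mul (card_le_card (filter_subset_filter _ hAa)) (hka i)).trans
        (card_filter_orthantBox_mul_le a i)
    have hfa' : (#{x ∈ A | x i = 0} : ℝ) * k ≤ ((∏ j, a j : ℕ) : ℝ) := by exact_mod_cast hfa
    exact le_of_mul_le_mul_right (hfa'.trans (haM.trans_eq (by ring))) (by exact_mod_cast hk)
  calc (bdry (↑A : Set (Fin d → ℤ)) : ℝ) ≤ 2 * ∑ i, (#{x ∈ A | x i = 0} : ℝ) := by
        exact_mod_cast hA.bdry_le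
    _ ≤ 2 * ∑ _i : Fin d, 2 * M := by gcongr with i; exact hface i
    _ = 4 * d * M := by rw [sum_const, card_univ, Fintype.card_fin, nsmul_eq_mul]; ring
end
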